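/- Let G be a finite simple graph with a vertex u, and let H be the graph obtained from G by adding three new vertices v, a, b together with the four edges {u,v}, {v,a}, {v,b}, {a,b} (fusing the 'small LR' gadget to u). Then γ(H) = s(G,u) + 1, where s(G,u) is the minimum size of a set of vertices of G that dominates every vertex of G except possibly u. Equivalently, H has a dominating set of size s+1 if and only if G has a set of size s that dominates all vertices except maybe u. -/

import Mathlib

/-- `S` is a dominating set of the finite simple graph `G`. -/
def DomSet {V : Type*} (G : SimpleGraph V) (S : Finset V) : Prop :=
  ∀ v : V, v ∈ S ∨ ∃ w ∈ S, G.Adj w v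

/-- `γ(G)`: the minimum size of a dominating set of `G`. -/
noncomputable def gamma {V : Type*} [Fintype V] (G : SimpleGraph V) : ℕ :=
  sInf {n | ∃ S : Finset V, DomSet G S ∧ S.card = n}

/-- `S` is a rooted dominating set of `(G, u)`: every vertex other than `u` is in `S`
or adjacent to a vertex of `S`. -/
def RootedDomSet {V : Type*} (G : SimpleGraph V) (u : V) (S : Finset V) : Prop :=
  ∀ v : V, v ≠ u → (v ∈ S ∨ ∃ w ∈ S, G.Adj w v)

/-- `s(G, u)`: the minimum size of a rooted dominating set of `(G, u)`. -/
noncomputable def sRoot {V : Type*} [Fintype V] (G : SimpleGraph V) (u : V) : ℕ :=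
  sInf {n | ∃ S : Finset V, RootedDomSet G u S ∧ S.card = n}

/-- The graph obtained from `G` by fusing the 'small LR' gadget to `u`:
three new vertices `v = Sum.inr 0`, `a = Sum.inr 1`, `b = Sum.inr 2` are added,
together with the four edges `{u,v}`, `{v,a}`, `{v,b}`, `{a,b}`. -/
def fuseLR {V : Type*} (G : SimpleGraph V) (u : V) : SimpleGraph (V ⊕ Fin 3) :=
  SimpleGraph.fromRel fun x y =>
    match x, y with
    | Sum.inl a, Sum.inl b => G.Adj a b
    | Sum.inl a, Sum.inr i => a = u ∧ i = 0
    | Sum.inr _, Sum.inr _ => True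
    | _, _ => False

lemma fuse_adj_inl_inl {V : Type*} (G : SimpleGraph V) (u : V) {a b : V} :
    (fuseLR G u).Adj (Sum.inl a) (Sum.inl b) ↔ G.Adj a b := by
  constructor
  · rintro ⟨h, h1 | h1⟩
    · exact h1
    · exact h1.symm
  · intro h; exact ⟨by simp [h.ne], Or.inl h⟩

lemma fuse_adj_inr_inl {V : Type*} (G : SimpleGraph V) (u : V) {a : V} {i : Fin 3}
    (h : (fuseLR G u).Adj (Sum.inr i) (Sum.inl a)) : a = u ∧ i = 0 := by
  obtain ⟨_, h1 | h1⟩ := h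
  · exact absurd h1 (by simp)
  · exact h1

/-- Part (2) of Lemma 1 (Covering): for the graph `H` obtained from `G` by fusing a
small LR gadget to `u`, one has `γ(H) = s(G,u) + 1`; equivalently, `H` has a
dominating set of size `s + 1` if and only if `G` has a set of size `s` dominating
every vertex except maybe `u`. -/
theorem stmt9 {V : Type*} [Fintype V] (G : SimpleGraph V) (u : V) :
    gamma (fuseLR G u) = sRoot G u + 1 ∧
    ∀ s : ℕ,
      (∃ S : Finset (V ⊕ Fin 3), DomSet (fuseLR G u) S ∧ S.card ≤ s + 1) ↔
      (∃ T : Finset V, RootedDomSet G u T ∧ T.card ≤ s) := by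
  classical
  have hforward : ∀ T : Finset V, RootedDomSet G u T →
      ∃ S : Finset (V ⊕ Fin 3), DomSet (fuseLR G u) S ∧ S.card ≤ T.card + 1 := by
    intro T hT
    refine ⟨insert (Sum.inr 0) (T.image (Sum.inl : V → V ⊕ Fin 3)), ?_, ?_⟩
    · intro x
      match x with
      | Sum.inr i =>
        by_cases hi : i = 0
        · left; simp [hi]
        · right; exact ⟨Sum.inr 0, by simp, by simp [fuseLR, Ne.symm hi]⟩
      | Sum.inl v =>
        by_cases hv : v = u
        · right; exact ⟨Sum.inr 0, by simp, (fuseLR G u).adj_symm (by simp [fuseLR, hv])⟩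
        · rcases hT v hv with h | ⟨w, hw, hadj⟩
          · left; simp [h]
          · right
            exact ⟨Sum.inl w, by simp [hw], (fuse_adj_inl_inl G u).2 hadj⟩
    · exact (Finset.card_insert_le _ _).trans
        (Nat.add_le_add_right Finset.card_image_le 1)
  have hback : ∀ S : Finset (V ⊕ Fin 3), DomSet (fuseLR G u) S →
      ∃ T : Finset V, RootedDomSet G u T ∧ T.card + 1 ≤ S.card := by
    intro S hS
    set T := Finset.univ.filter (fun w => Sum.inl w ∈ S) with hTdef
    have hTsub : T.image Sum.inl ⊆ S := by
      intro x hx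
      simp only [hTdef, Finset.mem_image, Finset.mem_filter, Finset.mem_univ, true_and] at hx
      obtain ⟨w, hw, rfl⟩ := hx
      exact hw
    have hinr : ∃ j : Fin 3, Sum.inr j ∈ S := by
      rcases hS (Sum.inr 1) with h | ⟨w, hw, hadj⟩
      · exact ⟨1, h⟩
      · match w with
        | Sum.inr j => exact ⟨j, hw⟩
        | Sum.inl a =>
          exfalso
          have := fuse_adj_inr_inl G u ((fuseLR G u).adj_symm hadj)
          exact absurd this.2 (by decide)
    obtain ⟨j, hj⟩ := hinr
    refine ⟨T, ?_, ?_⟩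
    · intro v hv
      rcases hS (Sum.inl v) with h | ⟨w, hw, hadj⟩
      · left; simp [hTdef, h]
      · match w with
        | Sum.inl a =>
          right
          exact ⟨a, by simp [hTdef, hw], (fuse_adj_inl_inl G u).1 hadj⟩
        | Sum.inr i =>
          exact absurd (fuse_adj_inr_inl G u hadj).1 hv
    · have hsub : insert (Sum.inr j : V ⊕ Fin 3) (T.image (Sum.inl : V → V ⊕ Fin 3)) ⊆ S :=
        Finset.insert_subset hj hTsub
      have hcard : (insert (Sum.inr j : V ⊕ Fin 3) (T.image (Sum.inl : V → V ⊕ Fin 3))).card = T.card + 1 := by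
        rw [Finset.card_insert_of_notMem (by simp), Finset.card_image_of_injective _ Sum.inl_injective]
      calc T.card + 1 = (insert (Sum.inr j : V ⊕ Fin 3) (T.image (Sum.inl : V → V ⊕ Fin 3))).card := hcard.symm
        _ ≤ S.card := Finset.card_le_card hsub
  constructor
  · apply le_antisymm
    · have hne : {n | ∃ T : Finset V, RootedDomSet G u T ∧ T.card = n}.Nonempty :=
        ⟨_, Finset.univ, fun v _ => Or.inl (Finset.mem_univ v), rfl⟩
      obtain ⟨T, hT, hTc⟩ := Nat.sInf_mem hne
      obtain ⟨S, hS, hSc⟩ := hforward T hT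
      have h1 : gamma (fuseLR G u) ≤ S.card := Nat.sInf_le ⟨S, hS, rfl⟩
      unfold sRoot
      omega
    · have hne : {n | ∃ S : Finset (V ⊕ Fin 3), DomSet (fuseLR G u) S ∧ S.card = n}.Nonempty :=
        ⟨_, Finset.univ, fun v => Or.inl (Finset.mem_univ v), rfl⟩
      obtain ⟨S, hS, hSc⟩ := Nat.sInf_mem hne
      obtain ⟨T, hT, hc⟩ := hback S hS
      have h1 : sRoot G u ≤ T.card := Nat.sInf_le ⟨T, hT, rfl⟩
      unfold gamma
      omega
  · intro s
    constructor
    · rintro ⟨S, hS, hSc⟩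
      obtain ⟨T, hT, hc⟩ := hback S hS
      exact ⟨T, hT, by omega⟩
    · rintro ⟨T, hT, hTc⟩
      obtain ⟨S, hS, hc⟩ := hforward T hT
      exact ⟨S, hS, by omega⟩
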